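/- (Improved rate under compatible boundary data) Let $a<b$, $k>0$, $0<\lambda\le\pi/2$, $n\in\mathbb{N}$, $\epsilon\in J_n=[\,k((b-a)/((n+1)\pi-\lambda))^2,\; k((b-a)/(n\pi+\lambda))^2\,]$, let $f:[a,b]\to\mathbb{R}$ be three times continuously differentiable with $f'(a)=0$ and $f'(b)=0$, and set $\mu_1=\sup_{t\in[a,b]}|f''(t)|$, $\mu_2=\sup_{t\in[a,b]}|f'''(t)|$. Then the unique solution $y_\epsilon$ of the Neumann problem $\epsilon y''+ky=f(t)$, $y'(a)=y'(b)=0$ satisfies for all $t\in[a,b]$: $\left|y_\epsilon(t)-\frac{f(t)}{k}\right|\le\frac{\epsilon}{k^2}\left[\frac{1}{\sin\lambda}\big(|f''(a)|+\mu_2(b-a)\big)+\big(\mu_1+|f''(a)|+\mu_2(b-a)\big)\right]$; in particular the convergence to the reduced solution $u=f/k$ is of order $\mathcal{O}(\epsilon)$. -/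

import Mathlib

/-!
Put `ω = √(k / ε)`. The error `w = f - k y` solves `w'' + ω² w = f''` with `w'(a) = w'(b) = 0`.
Variation of constants gives `ω w(t) = ω w(a) cos (ω (t - a)) + ∫ₐᵗ f''(s) sin (ω (t - s)) ds`,
and the condition `w'(b) = 0` gives `ω w(a) sin (ω (b - a)) = ∫ₐᵇ f''(s) cos (ω (b - s)) ds`.
One integration by parts bounds each integral by `O(1 / ω)` in terms of `f''` and `f'''`.
Finally `ε ∈ Jₙ` places `ω (b - a)` in `[nπ + λ, (n + 1)π - λ]`, where `|sin| ≥ sin λ`.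
-/

open Real Set

/-- `y` (with first and second derivatives `y'`, `y''` on `[a,b]`) is a twice
continuously differentiable solution of the Neumann problem
`ε y'' + k y = f(t)` on `[a,b]`, `y'(a) = y'(b) = 0`. -/
def IsNeumannSolution (a b k ε : ℝ) (f y y' y'' : ℝ → ℝ) : Prop :=
  (∀ t ∈ Icc a b, HasDerivWithinAt y (y' t) (Icc a b) t) ∧
  (∀ t ∈ Icc a b, HasDerivWithinAt y' (y'' t) (Icc a b) t) ∧
  ContinuousOn y'' (Icc a b) ∧
  (∀ t ∈ Icc a b, ε * y'' t + k * y t = f t) ∧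
  y' a = 0 ∧ y' b = 0

theorem integral_eq_sub_of_hasDerivWithinAt_Icc {a b : ℝ} {g g' : ℝ → ℝ} (hab : a ≤ b)
    (hg : ∀ x ∈ Icc a b, HasDerivWithinAt g (g' x) (Icc a b) x)
    (hg' : IntervalIntegrable g' MeasureTheory.volume a b) :
    ∫ x in a..b, g' x = g b - g a :=
  intervalIntegral.integral_eq_sub_of_hasDeriv_right_of_le hab
    (fun x hx => (hg x hx).continuousWithinAt)
    (fun x hx => ((hg x (Ioo_subset_Icc_self hx)).hasDerivAt
      (Icc_mem_nhds hx.1 hx.2)).hasDerivWithinAt) hg'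

theorem abs_le_sSup_image_abs {g : ℝ → ℝ} {a b t : ℝ} (hg : ContinuousOn g (Icc a b))
    (ht : t ∈ Icc a b) : |g t| ≤ sSup ((fun s => |g s|) '' Icc a b) :=
  le_csSup (isCompact_Icc.bddAbove_image hg.abs) ⟨t, ht, rfl⟩

theorem sqrt_div_mul_mem_Icc {k c p q ε : ℝ} (hk : 0 < k) (hc : 0 < c) (hp : 0 < p) (hq : 0 < q)
    (hε : ε ∈ Icc (k * (c / q) ^ 2) (k * (c / p) ^ 2)) : √(k / ε) * c ∈ Icc p q := by
  have hε₀ : 0 < ε := (by positivity : 0 < k * (c / q) ^ 2).trans_le hε.1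
  constructor
  · rw [← div_le_iff₀ hc, Real.le_sqrt (by positivity) (by positivity), le_div_iff₀ hε₀]
    calc (p / c) ^ 2 * ε ≤ (p / c) ^ 2 * (k * (c / p) ^ 2) := by gcongr; exact hε.2
      _ = k := by field_simp
  · rw [← le_div_iff₀ hc, Real.sqrt_le_left (by positivity), div_le_iff₀ hε₀]
    calc k = (q / c) ^ 2 * (k * (c / q) ^ 2) := by field_simp
      _ ≤ (q / c) ^ 2 * ε := by gcongr; exact hε.1

theorem sin_le_abs_sin_of_mem_Icc {lam x : ℝ} (n : ℕ) (hlam : 0 ≤ lam)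
    (hx : x ∈ Icc (n * π + lam) ((n + 1) * π - lam)) : sin lam ≤ |sin x| := by
  have hsin : |sin x| = |sin (x - n * π)| := by
    conv_lhs => rw [← sub_add_cancel x (n * π), sin_add_nat_mul_pi]
    rw [abs_mul, abs_pow, abs_neg, abs_one, one_pow, one_mul]
  rw [hsin]
  refine le_trans ?_ (le_abs_self _)
  obtain ⟨hx₁, hx₂⟩ := hx
  rcases le_total (x - n * π) (π / 2) with h | h
  · exact sin_le_sin_of_le_of_le_pi_div_two (by linarith [pi_pos]) h (by linarith)
  · rw [← sin_pi_sub (x - n * π)]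
    exact sin_le_sin_of_le_of_le_pi_div_two (by linarith [pi_pos]) (by linarith) (by linarith)

section Oscillator

variable {a b ω M : ℝ} {z z' z'' h h' : ℝ → ℝ}

/-- The phase `θ` covers both components of the state:
`θ = 0` gives `ω z`, `θ = π / 2` gives `z'`. -/
theorem oscillator_variation_of_constants (hab : a ≤ b)
    (hz : ∀ s ∈ Icc a b, HasDerivWithinAt z (z' s) (Icc a b) s)
    (hz' : ∀ s ∈ Icc a b, HasDerivWithinAt z' (z'' s) (Icc a b) s)
    (hode : ∀ s ∈ Icc a b, z'' s + ω ^ 2 * z s = h s) (hh : ContinuousOn h (Icc a b)) (θ : ℝ) :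
    z' b * sin θ + ω * z b * cos θ =
      z' a * sin (ω * (b - a) + θ) + ω * z a * cos (ω * (b - a) + θ) +
        ∫ s in a..b, h s * sin (ω * (b - s) + θ) := by
  have hφ : ∀ s ∈ Icc a b, HasDerivWithinAt
      (fun s => z' s * sin (ω * (b - s) + θ) + ω * z s * cos (ω * (b - s) + θ))
      (h s * sin (ω * (b - s) + θ)) (Icc a b) s := by
    intro s hs
    have harg : HasDerivWithinAt (fun s => ω * (b - s) + θ) (-ω) (Icc a b) s := by
      simpa using (((hasDerivWithinAt_id s _).const_sub b).const_mul ω).add_const θ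
    refine (((hz' s hs).mul harg.sin).add (((hz s hs).const_mul ω).mul harg.cos)).congr_deriv ?_
    linear_combination sin (ω * (b - s) + θ) * hode s hs
  have hint : IntervalIntegrable (fun s => h s * sin (ω * (b - s) + θ)) MeasureTheory.volume a b :=
    (hh.mul (by fun_prop : Continuous fun s => sin (ω * (b - s) + θ)).continuousOn
      ).intervalIntegrable_of_Icc hab
  rw [integral_eq_sub_of_hasDerivWithinAt_Icc hab hφ hint]
  simp only [sub_self, mul_zero, zero_add]
  ring

theorem abs_integral_mul_sin_le (hab : a ≤ b) (hω : 0 < ω)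
    (hh : ∀ s ∈ Icc a b, HasDerivWithinAt h (h' s) (Icc a b) s)
    (hh' : ContinuousOn h' (Icc a b)) (hM : ∀ s ∈ Icc a b, |h' s| ≤ M) (θ : ℝ) :
    |∫ s in a..b, h s * sin (ω * (b - s) + θ)| ≤
      (|h b| * |cos θ| + |h a| + M * (b - a)) / ω := by
  set v : ℝ → ℝ := fun s => cos (ω * (b - s) + θ) / ω
  have hv : ∀ s ∈ Icc a b, HasDerivWithinAt v (sin (ω * (b - s) + θ)) (Icc a b) s := by
    intro s _
    have harg : HasDerivWithinAt (fun s => ω * (b - s) + θ) (-ω) (Icc a b) s := by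
      simpa using (((hasDerivWithinAt_id s _).const_sub b).const_mul ω).add_const θ
    refine (harg.cos.div_const ω).congr_deriv ?_
    field_simp
  have hparts := intervalIntegral.integral_mul_deriv_eq_deriv_mul_of_hasDerivWithinAt
    (uIcc_of_le hab ▸ hh) (uIcc_of_le hab ▸ hv) (hh'.intervalIntegrable_of_Icc hab)
    ((by fun_prop : Continuous fun s => sin (ω * (b - s) + θ)).intervalIntegrable _ _)
  have hvb : |h b * v b| = |h b| * |cos θ| / ω := by
    simp [v, abs_mul, abs_div, abs_of_pos hω, mul_div_assoc]
  have hva : |h a * v a| ≤ |h a| / ω := by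
    rw [abs_mul, abs_div, abs_of_pos hω, mul_div_assoc']
    gcongr
    exact mul_le_of_le_one_right (abs_nonneg _) (abs_cos_le_one _)
  have hrest : |∫ s in a..b, h' s * v s| ≤ M * (b - a) / ω := by
    have hbound : ∀ s ∈ uIoc a b, ‖h' s * v s‖ ≤ M / ω := by
      intro s hs
      rw [uIoc_of_le hab] at hs
      rw [Real.norm_eq_abs, abs_mul, abs_div, abs_of_pos hω, mul_div_assoc']
      gcongr
      calc |h' s| * |cos (ω * (b - s) + θ)| ≤ |h' s| :=
            mul_le_of_le_one_right (abs_nonneg _) (abs_cos_le_one _)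
        _ ≤ M := hM s (Ioc_subset_Icc_self hs)
    have := intervalIntegral.norm_integral_le_of_norm_le_const hbound
    rwa [Real.norm_eq_abs, abs_of_nonneg (sub_nonneg.2 hab), div_mul_eq_mul_div] at this
  rw [hparts]
  calc |h b * v b - h a * v a - ∫ s in a..b, h' s * v s|
      ≤ |h b * v b| + |h a * v a| + |∫ s in a..b, h' s * v s| :=
        (abs_sub _ _).trans (add_le_add_left (abs_sub _ _) _)
    _ ≤ |h b| * |cos θ| / ω + |h a| / ω + M * (b - a) / ω := by gcongr; exact hvb.le
    _ = _ := by ring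

theorem sq_mul_abs_mul_abs_sin_le_of_neumann (hab : a ≤ b) (hω : 0 < ω)
    (hz : ∀ s ∈ Icc a b, HasDerivWithinAt z (z' s) (Icc a b) s)
    (hz' : ∀ s ∈ Icc a b, HasDerivWithinAt z' (z'' s) (Icc a b) s)
    (hode : ∀ s ∈ Icc a b, z'' s + ω ^ 2 * z s = h s)
    (hh : ∀ s ∈ Icc a b, HasDerivWithinAt h (h' s) (Icc a b) s)
    (hh' : ContinuousOn h' (Icc a b)) (hM : ∀ s ∈ Icc a b, |h' s| ≤ M)
    (hza : z' a = 0) (hzb : z' b = 0) :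
    ω ^ 2 * |z a| * |sin (ω * (b - a))| ≤ |h a| + M * (b - a) := by
  have hrep := oscillator_variation_of_constants hab hz hz' hode
    (fun s hs => (hh s hs).continuousWithinAt) (π / 2)
  have hbound := abs_integral_mul_sin_le hab hω hh hh' hM (π / 2)
  rw [hza, hzb, sin_pi_div_two, cos_pi_div_two, sin_add_pi_div_two, cos_add_pi_div_two] at hrep
  rw [cos_pi_div_two, abs_zero, mul_zero, zero_add] at hbound
  have hza_eq : ω * z a * sin (ω * (b - a)) = ∫ s in a..b, h s * sin (ω * (b - s) + π / 2) := by
    linear_combination hrep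
  calc ω ^ 2 * |z a| * |sin (ω * (b - a))|
      = ω * |∫ s in a..b, h s * sin (ω * (b - s) + π / 2)| := by
        rw [← hza_eq, abs_mul, abs_mul, abs_of_pos hω]; ring
    _ ≤ ω * ((|h a| + M * (b - a)) / ω) := by gcongr
    _ = |h a| + M * (b - a) := by field_simp

theorem sq_mul_abs_le_of_deriv_left_eq_zero {μ t : ℝ} (hω : 0 < ω)
    (hz : ∀ s ∈ Icc a b, HasDerivWithinAt z (z' s) (Icc a b) s)
    (hz' : ∀ s ∈ Icc a b, HasDerivWithinAt z' (z'' s) (Icc a b) s)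
    (hode : ∀ s ∈ Icc a b, z'' s + ω ^ 2 * z s = h s)
    (hh : ∀ s ∈ Icc a b, HasDerivWithinAt h (h' s) (Icc a b) s)
    (hh' : ContinuousOn h' (Icc a b)) (hμ : ∀ s ∈ Icc a b, |h s| ≤ μ)
    (hM : ∀ s ∈ Icc a b, |h' s| ≤ M) (hza : z' a = 0) (ht : t ∈ Icc a b) :
    ω ^ 2 * |z t| ≤ ω ^ 2 * |z a| + (μ + |h a| + M * (b - a)) := by
  have hsub : Icc a t ⊆ Icc a b := Icc_subset_Icc_right ht.2
  have hrep := oscillator_variation_of_constants ht.1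
    (fun s hs => (hz s (hsub hs)).mono hsub) (fun s hs => (hz' s (hsub hs)).mono hsub)
    (fun s hs => hode s (hsub hs)) (fun s hs => (hh s (hsub hs)).continuousWithinAt.mono hsub) 0
  have hbound := abs_integral_mul_sin_le ht.1 hω (fun s hs => (hh s (hsub hs)).mono hsub)
    (hh'.mono hsub) (fun s hs => hM s (hsub hs)) 0
  simp only [sin_zero, cos_zero, mul_zero, mul_one, add_zero, zero_add, hza, zero_mul] at hrep
  simp only [add_zero, cos_zero, abs_one, mul_one] at hbound
  have hcos : |cos (ω * (t - a))| ≤ 1 := abs_cos_le_one _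
  have hM₀ : 0 ≤ M := (abs_nonneg _).trans (hM a ⟨le_rfl, ht.1.trans ht.2⟩)
  calc ω ^ 2 * |z t| = ω * |ω * z a * cos (ω * (t - a)) +
        ∫ s in a..t, h s * sin (ω * (t - s))| := by
        rw [← hrep, abs_mul, abs_of_pos hω]; ring
    _ ≤ ω * (ω * |z a| + (|h t| + |h a| + M * (t - a)) / ω) := by
        gcongr
        refine (abs_add_le _ _).trans (add_le_add ?_ hbound)
        rw [abs_mul, abs_mul, abs_of_pos hω]
        exact mul_le_of_le_one_right (by positivity) hcos
    _ = ω ^ 2 * |z a| + (|h t| + |h a| + M * (t - a)) := by field_simp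
    _ ≤ ω ^ 2 * |z a| + (μ + |h a| + M * (b - a)) := by
        gcongr
        · exact hμ t ht
        · exact ht.2

theorem abs_le_of_neumann {μ σ t : ℝ} (hω : 0 < ω)
    (hz : ∀ s ∈ Icc a b, HasDerivWithinAt z (z' s) (Icc a b) s)
    (hz' : ∀ s ∈ Icc a b, HasDerivWithinAt z' (z'' s) (Icc a b) s)
    (hode : ∀ s ∈ Icc a b, z'' s + ω ^ 2 * z s = h s)
    (hh : ∀ s ∈ Icc a b, HasDerivWithinAt h (h' s) (Icc a b) s)
    (hh' : ContinuousOn h' (Icc a b)) (hμ : ∀ s ∈ Icc a b, |h s| ≤ μ)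
    (hM : ∀ s ∈ Icc a b, |h' s| ≤ M) (hza : z' a = 0) (hzb : z' b = 0)
    (hσ : 0 < σ) (hsin : σ ≤ |sin (ω * (b - a))|) (ht : t ∈ Icc a b) :
    |z t| ≤ (1 / σ * (|h a| + M * (b - a)) + (μ + |h a| + M * (b - a))) / ω ^ 2 := by
  have hleft := sq_mul_abs_le_of_deriv_left_eq_zero hω hz hz' hode hh hh' hμ hM hza ht
  have hright := sq_mul_abs_mul_abs_sin_le_of_neumann (ht.1.trans ht.2) hω hz hz' hode hh hh'
    hM hza hzb
  have hza_le : ω ^ 2 * |z a| ≤ 1 / σ * (|h a| + M * (b - a)) := by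
    rw [one_div_mul_eq_div, le_div_iff₀ hσ]
    exact (mul_le_mul_of_nonneg_left hsin (by positivity)).trans hright
  rw [le_div_iff₀ (by positivity)]
  linarith

end Oscillator

/-- improved rate under compatible boundary data: for `ε ∈ Jₙ` and a
three times continuously differentiable `f` with `f'(a) = f'(b) = 0`, the solution
`y_ε` of the Neumann problem satisfies, for all `t ∈ [a,b]`,
`|y_ε(t) - f(t)/k| ≤ (ε/k²) [ (1/sin λ)(|f''(a)| + μ₂(b-a)) + (μ₁ + |f''(a)| + μ₂(b-a)) ]`,
where `μ₁ = sup |f''|`, `μ₂ = sup |f'''|`; in particular the convergence to the reduced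
solution `u = f/k` is of order `O(ε)`. -/
theorem stmt_13 (a b k lam ε : ℝ) (n : ℕ) (f f' f'' f''' y y' y'' : ℝ → ℝ)
    (hab : a < b) (hk : 0 < k) (hlam : 0 < lam) (hlam' : lam ≤ π / 2)
    (hε : ε ∈ Icc (k * ((b - a) / ((n + 1) * π - lam)) ^ 2)
      (k * ((b - a) / (n * π + lam)) ^ 2))
    (hf : ∀ t ∈ Icc a b, HasDerivWithinAt f (f' t) (Icc a b) t)
    (hf' : ∀ t ∈ Icc a b, HasDerivWithinAt f' (f'' t) (Icc a b) t)
    (hf'' : ∀ t ∈ Icc a b, HasDerivWithinAt f'' (f''' t) (Icc a b) t)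
    (hf''' : ContinuousOn f''' (Icc a b))
    (hfa : f' a = 0) (hfb : f' b = 0)
    (hy : IsNeumannSolution a b k ε f y y' y'') :
    ∀ t ∈ Icc a b,
      |y t - f t / k| ≤
        ε / k ^ 2 *
          ((1 / Real.sin lam) *
              (|f'' a| + sSup ((fun t => |f''' t|) '' Icc a b) * (b - a)) +
            (sSup ((fun t => |f'' t|) '' Icc a b) + |f'' a| +
              sSup ((fun t => |f''' t|) '' Icc a b) * (b - a))) := by
  obtain ⟨hy, hy', -, hyode, hya, hyb⟩ := hy
  intro t ht
  have hp : 0 < n * π + lam := by positivity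
  have hq : 0 < (n + 1) * π - lam := by nlinarith [pi_pos]
  have hε₀ : 0 < ε := (by positivity : 0 < k * ((b - a) / ((n + 1) * π - lam)) ^ 2).trans_le hε.1
  set ω := √(k / ε)
  have hω : 0 < ω := sqrt_pos.2 (div_pos hk hε₀)
  have hω2 : ω ^ 2 = k / ε := sq_sqrt (div_pos hk hε₀).le
  have hsin : sin lam ≤ |sin (ω * (b - a))| :=
    sin_le_abs_sin_of_mem_Icc n hlam.le (sqrt_div_mul_mem_Icc hk (sub_pos.2 hab) hp hq hε)
  have hW := abs_le_of_neumann (z := fun s => f s - k * y s) (z' := fun s => f' s - k * y' s)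
    (z'' := fun s => f'' s - k * y'' s) hω
    (fun s hs => (hf s hs).sub ((hy s hs).const_mul k))
    (fun s hs => (hf' s hs).sub ((hy' s hs).const_mul k))
    (fun s hs => by rw [hω2]; field_simp; linear_combination -k * hyode s hs) hf'' hf'''
    (fun s hs => abs_le_sSup_image_abs (fun x hx => (hf'' x hx).continuousWithinAt) hs)
    (fun s hs => abs_le_sSup_image_abs hf''' hs) (by simp [hfa, hya]) (by simp [hfb, hyb])
    (sin_pos_of_pos_of_lt_pi hlam (by linarith [pi_pos])) hsin ht
  calc |y t - f t / k| = |f t - k * y t| / k := by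
        rw [show y t - f t / k = -(f t - k * y t) / k by field_simp; ring, abs_div, abs_neg,
          abs_of_pos hk]
    _ ≤ _ / ω ^ 2 / k := by gcongr
    _ = _ := by rw [hω2]; field_simp
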